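/- Every Nash equilibrium of the normal form of a finite extensive-form game with perfect information induces a Nash equilibrium of the subgame rooted at any node that is reached with positive probability under the equilibrium profile. -/

import Mathlib

/-- A finite extensive-form game tree: leaves carry payoff vectors, chance
nodes carry edge weights, player nodes carry the acting player's label. -/
inductive GameTree (N : ℕ) : Type
  | leaf (payoff : Fin N → ℝ)
  | chance (n : ℕ) (wt : Fin n → ℝ) (children : Fin n → GameTree N)
  | node (player : Fin N) (n : ℕ) (children : Fin n → GameTree N)

namespace GameTree

variable {N : ℕ}

/-- A behavioral strategy profile: at each node address, a probability for
each child index. -/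
abbrev Profile := List ℕ → ℕ → ℝ

/-- Chance weights are positive and sum to 1; all branching is nonempty. -/
def ValidWeights : GameTree N → Prop
  | leaf _ => True
  | chance n wt cs => 0 < n ∧ (∀ k, 0 < wt k) ∧ (∑ k, wt k) = 1 ∧ ∀ k, (cs k).ValidWeights
  | node _ n cs => 0 < n ∧ ∀ k, (cs k).ValidWeights

/-- The subtree at a given address (list of child indices), if any. -/
def nodeAt : GameTree N → List ℕ → Option (GameTree N)
  | t, [] => some t
  | leaf _, _ :: _ => none
  | chance n _ cs, k :: r => if h : k < n then (cs ⟨k, h⟩).nodeAt r else none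
  | node _ n cs, k :: r => if h : k < n then (cs ⟨k, h⟩).nodeAt r else none

/-- The player acting at a given address, if any. -/
def actor (t : GameTree N) (p : List ℕ) : Option (Fin N) :=
  match t.nodeAt p with
  | some (node i _ _) => some i
  | _ => none

/-- Probability, under profile `σ`, of the path descending from the current
subtree along the given child indices; `p` is the address of the current
subtree in the whole tree. -/
noncomputable def pathProb (σ : Profile) : GameTree N → List ℕ → List ℕ → ℝ
  | _, _, [] => 1
  | leaf _, _, _ :: _ => 0
  | chance n wt cs, p, k :: r =>
      if h : k < n then wt ⟨k, h⟩ * pathProb σ (cs ⟨k, h⟩) (p ++ [k]) r else 0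
  | node _ n cs, p, k :: r =>
      if h : k < n then σ p k * pathProb σ (cs ⟨k, h⟩) (p ++ [k]) r else 0

/-- The list of addresses of all leaves of the tree. -/
def leaves : GameTree N → List (List ℕ)
  | leaf _ => [[]]
  | chance n _ cs => (List.finRange n).flatMap fun k => ((cs k).leaves).map (k.val :: ·)
  | node _ n cs => (List.finRange n).flatMap fun k => ((cs k).leaves).map (k.val :: ·)

/-- Payoff to player `i` at the leaf with the given address (0 if invalid). -/
noncomputable def payoffAt : GameTree N → List ℕ → Fin N → ℝ
  | leaf u, [], i => u i
  | chance n _ cs, k :: r, i => if h : k < n then (cs ⟨k, h⟩).payoffAt r i else 0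
  | node _ n cs, k :: r, i => if h : k < n then (cs ⟨k, h⟩).payoffAt r i else 0
  | _, _, _ => 0

/-- Expected utility of player `i` under profile `σ`:
`u_i(σ) = Σ_λ u_i(λ) Pr[λ|σ]`. -/
noncomputable def util (σ : Profile) (t : GameTree N) (i : Fin N) : ℝ :=
  (t.leaves.map fun l => t.payoffAt l i * pathProb σ t [] l).sum

/-- The profile induced on the subgame rooted at address `ν`. -/
def induced (σ : Profile) (ν : List ℕ) : Profile := fun p => σ (ν ++ p)

/-- The behavioral profile corresponding to a pure strategy profile. -/
def pureProfile (s : List ℕ → ℕ) : Profile := fun p k => if s p = k then 1 else 0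

/-- A pure strategy profile selects an actual outgoing edge at each player node. -/
def ValidPure (t : GameTree N) (s : List ℕ → ℕ) : Prop :=
  ∀ p i m cs, t.nodeAt p = some (node i m cs) → s p < m

/-- A behavioral profile is a genuine probability assignment at each player node. -/
def ValidProfile (t : GameTree N) (σ : Profile) : Prop :=
  ∀ p i m cs, t.nodeAt p = some (node i m cs) →
    (∀ k < m, 0 ≤ σ p k) ∧ (∑ k ∈ Finset.range m, σ p k) = 1

/-- A totally mixed behavioral profile: every edge at every player node gets
strictly positive probability. -/
def TotallyMixed (t : GameTree N) (σ : Profile) : Prop :=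
  ∀ p i m cs, t.nodeAt p = some (node i m cs) →
    (∀ k < m, 0 < σ p k) ∧ (∑ k ∈ Finset.range m, σ p k) = 1

/-- The profile where player `j` deviates from `σ` to the pure strategy `s`. -/
def dev (t : GameTree N) (σ : Profile) (j : Fin N) (s : List ℕ → ℕ) : Profile :=
  fun p k => if t.actor p = some j then pureProfile s p k else σ p k

/-- Nash equilibrium: no player can improve by a unilateral pure deviation. -/
def IsNash (t : GameTree N) (σ : Profile) : Prop :=
  ∀ j : Fin N, ∀ s : List ℕ → ℕ, ValidPure t s → util (dev t σ j s) t j ≤ util σ t j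

/-- Subgame perfection: the induced profile is a Nash equilibrium of every subgame. -/
def IsSubgamePerfect (t : GameTree N) (σ : Profile) : Prop :=
  ∀ ν t', t.nodeAt ν = some t' → IsNash t' (induced σ ν)

/-- Every player is indifferent among all of their pure strategies. -/
def Indifferent (t : GameTree N) (σ : Profile) : Prop :=
  ∀ j : Fin N, ∀ s₁ s₂ : List ℕ → ℕ, ValidPure t s₁ → ValidPure t s₂ →
    util (dev t σ j s₁) t j = util (dev t σ j s₂) t j

/-- Player `j` is indifferent among all of `j`'s pure strategies. -/
def IndifferentFor (t : GameTree N) (σ : Profile) (j : Fin N) : Prop :=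
  ∀ s₁ s₂ : List ℕ → ℕ, ValidPure t s₁ → ValidPure t s₂ →
    util (dev t σ j s₁) t j = util (dev t σ j s₂) t j
variable {N : ℕ} {σ τ τ₁ τ₂ : Profile} {j : Fin N}

theorem pathProb_nil (σ : Profile) (t : GameTree N) (p : List ℕ) : pathProb σ t p [] = 1 := by
  cases t <;> simp [pathProb]

theorem nodeAt_append (a : List ℕ) (t : GameTree N) (b : List ℕ) :
    t.nodeAt (a ++ b) = (t.nodeAt a).bind (fun u => u.nodeAt b) := by
  induction a generalizing t with
  | nil => simp [nodeAt]
  | cons x r ih =>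
    cases t with
    | leaf u => simp [nodeAt]
    | chance n wt cs =>
      simp only [List.cons_append, nodeAt]
      split <;> simp [ih]
    | node i n cs =>
      simp only [List.cons_append, nodeAt]
      split <;> simp [ih]

theorem validWeights_nodeAt {t t' : GameTree N} (hw : t.ValidWeights) {p : List ℕ}
    (h : t.nodeAt p = some t') : t'.ValidWeights := by
  induction p generalizing t with
  | nil => simp [nodeAt] at h; subst h; exact hw
  | cons x r ih =>
    cases t with
    | leaf u => simp [nodeAt] at h
    | chance n wt cs =>
      simp only [nodeAt] at h
      split at h
      · exact ih (hw.2.2.2 _) h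
      · simp at h
    | node i n cs =>
      simp only [nodeAt] at h
      split at h
      · exact ih (hw.2 _) h
      · simp at h
/-- Localized congruence for path probabilities. -/
theorem pathProb_congr : ∀ (t : GameTree N) (b l : List ℕ),
    (∀ l₁ k l₂ i m cs, l = l₁ ++ k :: l₂ → t.nodeAt l₁ = some (node i m cs) → k < m →
      τ₁ (b ++ l₁) k = τ₂ (b ++ l₁) k) →
    pathProb τ₁ t b l = pathProb τ₂ t b l := by
  intro t b l
  induction l generalizing t b with
  | nil => intro _; simp [pathProb_nil]
  | cons x r ih =>
    intro h
    cases t with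
    | leaf u => simp [pathProb]
    | chance n wt cs =>
      simp only [pathProb]
      split
      · rename_i hx
        congr 1
        apply ih
        intro l₁ k l₂ i m cs' hl hna hk
        have := h (x :: l₁) k l₂ i m cs' (by simp [hl]) (by simp [nodeAt, hx, hna]) hk
        simpa [List.append_assoc] using this
      · rfl
    | node i n cs =>
      simp only [pathProb]
      split
      · rename_i hx
        have h0 : τ₁ b x = τ₂ b x := by
          have := h [] x r i n cs rfl (by simp [nodeAt]) hx
          simpa using this
        rw [h0]
        congr 1
        apply ih
        intro l₁ k l₂ i' m cs' hl hna hk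
        have := h (x :: l₁) k l₂ i' m cs' (by simp [hl]) (by simp [nodeAt, hx, hna]) hk
        simpa [List.append_assoc] using this
      · rfl

theorem util_congr {t : GameTree N}
    (h : ∀ p i m cs k, t.nodeAt p = some (node i m cs) → k < m → τ₁ p k = τ₂ p k) :
    util τ₁ t j = util τ₂ t j := by
  unfold util
  congr 1
  apply List.map_congr_left
  intro l _
  congr 1
  exact pathProb_congr t [] l (fun l₁ k l₂ i m cs _ hna hk => h l₁ i m cs k hna hk)

/-- Addresses of all player nodes of a tree. -/
def playerNodes : GameTree N → List (List ℕ)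
  | leaf _ => []
  | chance n _ cs => (List.finRange n).flatMap fun k => ((cs k).playerNodes).map (k.val :: ·)
  | node _ n cs => [] :: (List.finRange n).flatMap fun k => ((cs k).playerNodes).map (k.val :: ·)

theorem mem_playerNodes {t : GameTree N} {p : List ℕ} {i m cs}
    (h : t.nodeAt p = some (node i m cs)) : p ∈ playerNodes t := by
  induction p generalizing t with
  | nil =>
    simp [nodeAt] at h
    subst h
    simp [playerNodes]
  | cons x r ih =>
    cases t with
    | leaf u => simp [nodeAt] at h
    | chance n wt cs' =>
      simp only [nodeAt] at h
      split at h
      · rename_i hx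
        simp only [playerNodes, List.mem_flatMap]
        exact ⟨⟨x, hx⟩, List.mem_finRange _, List.mem_map.2 ⟨r, ih h, rfl⟩⟩
      · simp at h
    | node i' n cs' =>
      simp only [nodeAt] at h
      split at h
      · rename_i hx
        simp only [playerNodes, List.mem_cons, List.mem_flatMap]
        exact Or.inr ⟨⟨x, hx⟩, List.mem_finRange _, List.mem_map.2 ⟨r, ih h, rfl⟩⟩
      · simp at h
/-- Replace a profile's behavior at one address by a point mass on `k`. -/
noncomputable def upd (τ : Profile) (p : List ℕ) (k : ℕ) : Profile :=
  fun q k' => if q = p then (if k = k' then 1 else 0) else τ q k'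

theorem upd_self (τ : Profile) (p : List ℕ) (k k' : ℕ) :
    upd τ p k p k' = if k = k' then 1 else 0 := by simp [upd]

theorem upd_ne (τ : Profile) {p q : List ℕ} (h : q ≠ p) (k k' : ℕ) :
    upd τ p k q k' = τ q k' := by simp [upd, h]

theorem pathProb_upd_ne {t : GameTree N} {b l p : List ℕ} {k : ℕ}
    (h : ∀ l₁, b ++ l₁ ≠ p) :
    pathProb (upd τ p k) t b l = pathProb τ t b l := by
  apply pathProb_congr
  intro l₁ k' l₂ i m cs _ _ _
  simp [upd, h l₁]

theorem pathProb_decomp : ∀ (l : List ℕ) (t : GameTree N) (b q : List ℕ) {i m cs},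
    t.nodeAt q = some (node i m cs) → (∑ k ∈ Finset.range m, τ (b ++ q) k) = 1 →
    pathProb τ t b l = ∑ k ∈ Finset.range m, τ (b ++ q) k * pathProb (upd τ (b ++ q) k) t b l := by
  intro l
  induction l with
  | nil =>
    intro t b q i m cs hna hs
    simp [pathProb_nil, hs]
  | cons x r ih =>
    intro t b q i m cs hna hs
    cases t with
    | leaf u => simp [pathProb]
    | chance n wt cs' =>
      cases q with
      | nil => simp [nodeAt] at hna
      | cons y q' =>
        simp only [nodeAt] at hna
        split at hna
        · rename_i hy
          by_cases hx : x < n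
          · by_cases hxy : x = y
            · subst hxy
              have heq : b ++ x :: q' = (b ++ [x]) ++ q' := by simp
              rw [heq] at hs ⊢
              simp only [pathProb, dif_pos hx]
              rw [ih (cs' ⟨x, hx⟩) (b ++ [x]) q' hna hs, Finset.mul_sum]
              apply Finset.sum_congr rfl
              intro k _
              ring
            · have hne : ∀ k, pathProb (upd τ (b ++ y :: q') k) (chance n wt cs') b (x :: r)
                  = pathProb τ (chance n wt cs') b (x :: r) := by
                intro k
                apply pathProb_congr
                intro l₁ k' l₂ i₀ m₀ cs₀ hl _ _
                have hne2 : b ++ l₁ ≠ b ++ y :: q' := by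
                  intro he
                  have h3 := List.append_cancel_left he
                  rw [h3] at hl
                  simp only [List.cons_append] at hl
                  injection hl with h4 _
                  exact hxy h4
                simp [upd, hne2]
              have hterm : ∀ k ∈ Finset.range m,
                  τ (b ++ y :: q') k * pathProb (upd τ (b ++ y :: q') k) (chance n wt cs') b (x :: r)
                  = τ (b ++ y :: q') k * pathProb τ (chance n wt cs') b (x :: r) := fun k _ => by rw [hne k]
              rw [Finset.sum_congr rfl hterm, ← Finset.sum_mul, hs, one_mul]
          · simp [pathProb, hx]
        · simp at hna
    | node i' n cs' =>
      cases q with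
      | nil =>
        simp only [nodeAt, Option.some.injEq] at hna
        cases hna
        simp only [List.append_nil] at hs ⊢
        by_cases hx : x < m
        · have hterm : ∀ k ∈ Finset.range m,
              τ b k * pathProb (upd τ b k) (node i m cs) b (x :: r)
              = if k = x then τ b x * pathProb τ (cs ⟨x, hx⟩) (b ++ [x]) r else 0 := by
            intro k _
            simp only [pathProb, dif_pos hx]
            have h1 : upd τ b k b x = if k = x then 1 else 0 := by simp [upd]
            have h2 : pathProb (upd τ b k) (cs ⟨x, hx⟩) (b ++ [x]) r
                = pathProb τ (cs ⟨x, hx⟩) (b ++ [x]) r := by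
              apply pathProb_upd_ne
              intro l₁ hl
              have : b.length + (1 + l₁.length) = b.length := by
                simpa [List.length_append] using congrArg List.length hl
              omega
            rw [h1, h2]
            by_cases hkx : k = x
            · subst hkx; simp
            · simp [hkx]
          rw [Finset.sum_congr rfl hterm, Finset.sum_ite_eq' (Finset.range m) x]
          simp only [Finset.mem_range, hx, if_pos]
          simp only [pathProb, dif_pos hx]
        · simp [pathProb, hx]
      | cons y q' =>
        simp only [nodeAt] at hna
        split at hna
        · rename_i hy
          by_cases hx : x < n
          · by_cases hxy : x = y
            · subst hxy
              have heq : b ++ x :: q' = (b ++ [x]) ++ q' := by simp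
              have hbne : b ≠ (b ++ [x]) ++ q' := by
                intro hl
                have : b.length = b.length + 1 + q'.length := by
                  simpa [List.length_append] using congrArg List.length hl
                omega
              rw [heq] at hs ⊢
              simp only [pathProb, dif_pos hx]
              rw [ih (cs' ⟨x, hx⟩) (b ++ [x]) q' hna hs, Finset.mul_sum]
              apply Finset.sum_congr rfl
              intro k _
              have h1 : upd τ ((b ++ [x]) ++ q') k b x = τ b x := by simp [upd, hbne]
              rw [h1]
              ring
            · have hne : ∀ k, pathProb (upd τ (b ++ y :: q') k) (node i' n cs') b (x :: r)
                  = pathProb τ (node i' n cs') b (x :: r) := by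
                intro k
                apply pathProb_congr
                intro l₁ k' l₂ i₀ m₀ cs₀ hl _ _
                have hne2 : b ++ l₁ ≠ b ++ y :: q' := by
                  intro he
                  have h3 := List.append_cancel_left he
                  rw [h3] at hl
                  simp only [List.cons_append] at hl
                  injection hl with h4 _
                  exact hxy h4
                simp [upd, hne2]
              have hterm : ∀ k ∈ Finset.range m,
                  τ (b ++ y :: q') k * pathProb (upd τ (b ++ y :: q') k) (node i' n cs') b (x :: r)
                  = τ (b ++ y :: q') k * pathProb τ (node i' n cs') b (x :: r) := fun k _ => by rw [hne k]
              rw [Finset.sum_congr rfl hterm, ← Finset.sum_mul, hs, one_mul]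
          · simp [pathProb, hx]
        · simp at hna
theorem sum_map_sum {α : Type*} (L : List α) (s : Finset ℕ) (F : ℕ → α → ℝ) :
    (L.map fun a => ∑ k ∈ s, F k a).sum = ∑ k ∈ s, (L.map (F k)).sum := by
  induction L with
  | nil => simp
  | cons a L ih => simp [ih, Finset.sum_add_distrib]

theorem util_decomp {t : GameTree N} {p : List ℕ} {i : Fin N} {m : ℕ} {cs : Fin m → GameTree N}
    (hna : t.nodeAt p = some (node i m cs)) (hs : (∑ k ∈ Finset.range m, τ p k) = 1) :
    util τ t j = ∑ k ∈ Finset.range m, τ p k * util (upd τ p k) t j := by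
  unfold util
  have h1 : ∀ l, t.payoffAt l j * pathProb τ t [] l
      = ∑ k ∈ Finset.range m, τ p k * (t.payoffAt l j * pathProb (upd τ p k) t [] l) := by
    intro l
    have := pathProb_decomp (τ := τ) l t [] p (by simpa using hna) (by simpa using hs)
    simp only [List.nil_append] at this
    rw [this, Finset.mul_sum]
    apply Finset.sum_congr rfl
    intro k _
    ring
  rw [List.map_congr_left (fun l _ => h1 l), sum_map_sum]
  apply Finset.sum_congr rfl
  intro k _
  rw [← List.sum_map_mul_left]

open Classical in
/-- Choose the pure action encoded by an (almost-)deterministic profile. -/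
noncomputable def sChoice (t : GameTree N) (τ : Profile) : List ℕ → ℕ := fun p =>
  match t.nodeAt p with
  | some (node _ m _) =>
      if h : ∃ k, k < m ∧ ∀ k', τ p k' = if k = k' then 1 else 0 then h.choose else 0
  | _ => 0

open Classical in
theorem convex_bound {t : GameTree N} (hw : t.ValidWeights) {σ : Profile} (hn : IsNash t σ)
    (j : Fin N) :
    ∀ (L : List (List ℕ)) (τ : Profile),
    (∀ p i m cs, t.nodeAt p = some (node i m cs) → i ≠ j → ∀ k, k < m → τ p k = σ p k) →
    (∀ p m cs, t.nodeAt p = some (node j m cs) → p ∈ L →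
      (∀ k, k < m → 0 ≤ τ p k) ∧ (∑ k ∈ Finset.range m, τ p k) = 1) →
    (∀ p m cs, t.nodeAt p = some (node j m cs) → p ∉ L →
      ∃ k, k < m ∧ ∀ k', τ p k' = if k = k' then 1 else 0) →
    util τ t j ≤ util σ t j := by
  intro L
  induction L with
  | nil =>
    intro τ h3 _ h2
    set s : List ℕ → ℕ := sChoice t τ with hsdef
    have hsspec : ∀ p i m cs, t.nodeAt p = some (node i m cs) → s p < m ∧
        (i = j → ∀ k', τ p k' = if s p = k' then 1 else 0) := by
      intro p i m cs hna
      have hs0 : s p = if h : ∃ k, k < m ∧ ∀ k', τ p k' = if k = k' then 1 else 0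
          then h.choose else 0 := by
        rw [hsdef]
        unfold sChoice
        rw [hna]
      by_cases hex : ∃ k, k < m ∧ ∀ k', τ p k' = if k = k' then 1 else 0
      · rw [hs0, dif_pos hex]
        exact ⟨hex.choose_spec.1, fun _ => hex.choose_spec.2⟩
      · rw [hs0, dif_neg hex]
        constructor
        · have hwm := validWeights_nodeAt hw hna
          exact hwm.1
        · intro hij
          exfalso
          subst hij
          exact hex (h2 p m cs hna List.not_mem_nil)
    have hvp : ValidPure t s := fun p i m cs hna => (hsspec p i m cs hna).1
    have hcong : util τ t j = util (dev t σ j s) t j := by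
      apply util_congr
      intro p i m cs k hna hk
      unfold dev
      by_cases hij : i = j
      · subst hij
        rw [if_pos (by unfold actor; rw [hna])]
        rw [(hsspec p i m cs hna).2 rfl k]
        unfold pureProfile
        rfl
      · rw [if_neg (by unfold actor; rw [hna]; simpa using hij)]
        exact h3 p i m cs hna hij k hk
    rw [hcong]
    exact hn j s hvp
  | cons p L ih =>
    intro τ h3 h1 h2
    by_cases hp : ∃ m cs, t.nodeAt p = some (node j m cs)
    · obtain ⟨m, cs, hna⟩ := hp
      have hmix := h1 p m cs hna List.mem_cons_self
      rw [util_decomp hna hmix.2]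
      calc ∑ k ∈ Finset.range m, τ p k * util (upd τ p k) t j
          ≤ ∑ k ∈ Finset.range m, τ p k * util σ t j := by
            apply Finset.sum_le_sum
            intro k hk
            have hk' := Finset.mem_range.1 hk
            apply mul_le_mul_of_nonneg_left _ (hmix.1 k hk')
            apply ih (upd τ p k)
            · intro q i' m' cs' hq hij k' hk''
              have hqp : q ≠ p := by
                intro he; subst he; rw [hq] at hna
                exact hij (by injection hna with h'; injection h')
              simp only [upd, if_neg hqp]
              exact h3 q i' m' cs' hq hij k' hk''
            · intro q m' cs' hq hqL
              by_cases hqp : q = p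
              · subst hqp
                have hmm : m' = m := by rw [hq] at hna; injection hna with h'; injection h'
                subst hmm
                constructor
                · intro k' _
                  rw [upd_self]
                  split <;> norm_num
                · rw [show (∑ k' ∈ Finset.range m', upd τ q k q k')
                      = ∑ k' ∈ Finset.range m', if k = k' then (1:ℝ) else 0 from
                    Finset.sum_congr rfl (fun k' _ => upd_self τ q k k'), Finset.sum_ite_eq]
                  simp [hk']
              · have := h1 q m' cs' hq (List.mem_cons_of_mem p hqL)
                constructor
                · intro k' hk''
                  rw [upd_ne τ hqp]
                  exact this.1 k' hk''
                · rw [show (∑ k' ∈ Finset.range m', upd τ p k q k')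
                      = ∑ k' ∈ Finset.range m', τ q k' from
                    Finset.sum_congr rfl (fun k' _ => upd_ne τ hqp k k')]
                  exact this.2
            · intro q m' cs' hq hqL
              by_cases hqp : q = p
              · subst hqp
                have hmm : m' = m := by rw [hq] at hna; injection hna with h'; injection h'
                subst hmm
                exact ⟨k, hk', fun k' => upd_self τ q k k'⟩
              · have hnotin : q ∉ p :: L := by
                  simp only [List.mem_cons, not_or]
                  exact ⟨hqp, hqL⟩
                obtain ⟨k₀, hk₀, hpure⟩ := h2 q m' cs' hq hnotin
                exact ⟨k₀, hk₀, fun k' => by rw [upd_ne τ hqp]; exact hpure k'⟩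
        _ = util σ t j := by rw [← Finset.sum_mul, hmix.2, one_mul]
    · apply ih τ h3
      · intro q m' cs' hq hqL
        exact h1 q m' cs' hq (List.mem_cons_of_mem p hqL)
      · intro q m' cs' hq hqL
        by_cases hqp : q = p
        · exact absurd ⟨m', cs', hqp ▸ hq⟩ hp
        · exact h2 q m' cs' hq (by simp [List.mem_cons, hqp, hqL])
theorem pathProb_append : ∀ (ν : List ℕ) (t : GameTree N) (b : List ℕ) {t' : GameTree N},
    t.nodeAt ν = some t' → ∀ l,
    pathProb σ t b (ν ++ l) = pathProb σ t b ν * pathProb σ t' (b ++ ν) l := by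
  intro ν
  induction ν with
  | nil =>
    intro t b t' h l
    simp only [nodeAt, Option.some.injEq] at h
    subst h
    simp [pathProb_nil]
  | cons k ν' ih =>
    intro t b t' h l
    cases t with
    | leaf u => simp [nodeAt] at h
    | chance n wt cs =>
      simp only [nodeAt] at h
      split at h
      · rename_i hk
        simp only [List.cons_append, pathProb, dif_pos hk]
        rw [ih (cs ⟨k, hk⟩) (b ++ [k]) h l]
        have : b ++ [k] ++ ν' = b ++ k :: ν' := by simp
        rw [this, mul_assoc]
      · simp at h
    | node i n cs =>
      simp only [nodeAt] at h
      split at h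
      · rename_i hk
        simp only [List.cons_append, pathProb, dif_pos hk]
        rw [ih (cs ⟨k, hk⟩) (b ++ [k]) h l]
        have : b ++ [k] ++ ν' = b ++ k :: ν' := by simp
        rw [this, mul_assoc]
      · simp at h
  
theorem payoffAt_append : ∀ (ν : List ℕ) (t : GameTree N) {t' : GameTree N},
    t.nodeAt ν = some t' → ∀ l i, t.payoffAt (ν ++ l) i = t'.payoffAt l i := by
  intro ν
  induction ν with
  | nil =>
    intro t t' h l i
    simp only [nodeAt, Option.some.injEq] at h
    subst h
    simp
  | cons k ν' ih =>
    intro t t' h l i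
    cases t with
    | leaf u => simp [nodeAt] at h
    | chance n wt cs =>
      simp only [nodeAt] at h
      split at h
      · rename_i hk
        simp only [List.cons_append, payoffAt, dif_pos hk]
        exact ih (cs ⟨k, hk⟩) h l i
      · simp at h
    | node i' n cs =>
      simp only [nodeAt] at h
      split at h
      · rename_i hk
        simp only [List.cons_append, payoffAt, dif_pos hk]
        exact ih (cs ⟨k, hk⟩) h l i
      · simp at h

theorem pathProb_induced (ν : List ℕ) : ∀ (l : List ℕ) (u : GameTree N) (b : List ℕ),
    pathProb (induced σ ν) u b l = pathProb σ u (ν ++ b) l := by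
  intro l
  induction l with
  | nil => intro u b; simp [pathProb_nil]
  | cons x r ih =>
    intro u b
    cases u with
    | leaf u => simp [pathProb]
    | chance n wt cs =>
      simp only [pathProb]
      split
      · rw [ih]
        simp [List.append_assoc]
      · rfl
    | node i n cs =>
      simp only [pathProb]
      split
      · rw [ih]
        simp only [induced]
        simp [List.append_assoc]
      · rfl

theorem sum_flatMap' {α : Type*} (L : List α) (f : α → List ℝ) :
    (L.flatMap f).sum = (L.map fun a => (f a).sum).sum := by
  induction L with
  | nil => simp
  | cons a L ih => simp [ih]

theorem sum_finRange_single {n : ℕ} {k : ℕ} (hk : k < n) (g : Fin n → ℝ)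
    (hg : ∀ a : Fin n, a.val ≠ k → g a = 0) :
    ((List.finRange n).map g).sum = g ⟨k, hk⟩ := by
  rw [← Fin.sum_univ_def]
  apply Finset.sum_eq_single
  · intro a _ ha
    exact hg a (by simpa [Fin.ext_iff] using ha)
  · intro h
    exact absurd (Finset.mem_univ _) h

theorem leaves_sum_through :
    ∀ (ν : List ℕ) (t : GameTree N) {t' : GameTree N}, t.nodeAt ν = some t' →
    ∀ (f : List ℕ → ℝ),
    ((leaves t).map fun l => if ν <+: l then f l else 0).sum
      = ((leaves t').map fun l' => f (ν ++ l')).sum := by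
  intro ν
  induction ν with
  | nil =>
    intro t t' h f
    simp only [nodeAt, Option.some.injEq] at h
    subst h
    simp
  | cons k ν' ih =>
    intro t t' h f
    cases t with
    | leaf u => simp [nodeAt] at h
    | chance n wt cs =>
      simp only [nodeAt] at h
      split at h
      · rename_i hk
        simp only [leaves, List.map_flatMap, sum_flatMap', List.map_map]
        rw [List.map_congr_left (fun (a : Fin n) _ => rfl), sum_finRange_single hk
          (fun a => ((((cs a).leaves).map ((fun l => if k :: ν' <+: l then f l else 0) ∘
            (a.val :: ·))).sum))]
        · have : ∀ l ∈ (cs ⟨k, hk⟩).leaves,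
              ((fun l => if k :: ν' <+: l then f l else 0) ∘ (k :: ·)) l
              = (fun l => if ν' <+: l then (f ∘ (k :: ·)) l else 0) l := by
            intro l _
            simp only [Function.comp_apply]
            by_cases hpre : ν' <+: l
            · rw [if_pos hpre, if_pos (by simpa [List.cons_prefix_cons] using hpre)]
            · rw [if_neg hpre, if_neg (by simp [List.cons_prefix_cons, hpre])]
          rw [List.map_congr_left this, ih (cs ⟨k, hk⟩) h (f ∘ (k :: ·))]
          simp
        · intro a hak
          have : ∀ l ∈ (cs a).leaves,
              ((fun l => if k :: ν' <+: l then f l else 0) ∘ (a.val :: ·)) l = 0 := by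
            intro l _
            simp only [Function.comp_apply]
            rw [if_neg (by simp only [List.cons_prefix_cons, not_and]; exact fun h' _ => hak h'.symm)]
          rw [List.map_congr_left this]
          simp
      · simp at h
    | node i n cs =>
      simp only [nodeAt] at h
      split at h
      · rename_i hk
        simp only [leaves, List.map_flatMap, sum_flatMap', List.map_map]
        rw [List.map_congr_left (fun (a : Fin n) _ => rfl), sum_finRange_single hk
          (fun a => ((((cs a).leaves).map ((fun l => if k :: ν' <+: l then f l else 0) ∘
            (a.val :: ·))).sum))]
        · have : ∀ l ∈ (cs ⟨k, hk⟩).leaves,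
              ((fun l => if k :: ν' <+: l then f l else 0) ∘ (k :: ·)) l
              = (fun l => if ν' <+: l then (f ∘ (k :: ·)) l else 0) l := by
            intro l _
            simp only [Function.comp_apply]
            by_cases hpre : ν' <+: l
            · rw [if_pos hpre, if_pos (by simpa [List.cons_prefix_cons] using hpre)]
            · rw [if_neg hpre, if_neg (by simp [List.cons_prefix_cons, hpre])]
          rw [List.map_congr_left this, ih (cs ⟨k, hk⟩) h (f ∘ (k :: ·))]
          simp
        · intro a hak
          have : ∀ l ∈ (cs a).leaves,
              ((fun l => if k :: ν' <+: l then f l else 0) ∘ (a.val :: ·)) l = 0 := by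
            intro l _
            simp only [Function.comp_apply]
            rw [if_neg (by simp only [List.cons_prefix_cons, not_and]; exact fun h' _ => hak h'.symm)]
          rw [List.map_congr_left this]
          simp
      · simp at h
theorem sum_map_add {α : Type*} (L : List α) (g h : α → ℝ) :
    (L.map fun a => g a + h a).sum = (L.map g).sum + (L.map h).sum := by
  induction L with
  | nil => simp
  | cons a L ih => simp [ih]; ring

theorem util_split {t t' : GameTree N} {ν : List ℕ} (hν : t.nodeAt ν = some t')
    (ρ : Profile) (j : Fin N) :
    util ρ t j = ((leaves t).map fun l =>
        if ν <+: l then 0 else t.payoffAt l j * pathProb ρ t [] l).sum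
      + pathProb ρ t [] ν * util (induced ρ ν) t' j := by
  unfold util
  have hsplit : ∀ l, t.payoffAt l j * pathProb ρ t [] l
      = (if ν <+: l then t.payoffAt l j * pathProb ρ t [] l else 0)
        + (if ν <+: l then 0 else t.payoffAt l j * pathProb ρ t [] l) := by
    intro l
    by_cases hp : ν <+: l <;> simp [hp]
  rw [List.map_congr_left (fun l (_ : l ∈ leaves t) => hsplit l), sum_map_add,
    leaves_sum_through ν t hν (fun l => t.payoffAt l j * pathProb ρ t [] l)]
  have hterm : ∀ l' , t.payoffAt (ν ++ l') j * pathProb ρ t [] (ν ++ l')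
      = pathProb ρ t [] ν * (t'.payoffAt l' j * pathProb (induced ρ ν) t' [] l') := by
    intro l'
    rw [payoffAt_append ν t hν, pathProb_append ν t [] hν, pathProb_induced ν l' t' []]
    simp only [List.nil_append, List.append_nil]
    ring
  rw [List.map_congr_left (fun l' (_ : l' ∈ leaves t') => hterm l'), List.sum_map_mul_left]
  ring
end GameTree

open GameTree in
/-- a Nash equilibrium of a perfect-information extensive-form game
induces a Nash equilibrium on the subgame rooted at any node reached with
positive probability. -/
theorem nash_induces_nash_on_reached_subgames {N : ℕ} (t : GameTree N)
    (hw : t.ValidWeights) (σ : GameTree.Profile) (hσ : ValidProfile t σ)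
    (hn : IsNash t σ) (ν : List ℕ) (t' : GameTree N) (hν : t.nodeAt ν = some t')
    (hpos : 0 < pathProb σ t [] ν) :
    IsNash t' (induced σ ν) := by
  intro j s' hs'
  have hsub : ∀ p, t.nodeAt (ν ++ p) = t'.nodeAt p := by
    intro p
    rw [nodeAt_append, hν]
    rfl
  set τ : GameTree.Profile := fun p k =>
    if ν <+: p ∧ t.actor p = some j then pureProfile s' (p.drop ν.length) k else σ p k with hτdef
  have hactor : ∀ p i m cs, t.nodeAt p = some (node i m cs) → t.actor p = some i := by
    intro p i m cs hna
    unfold actor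
    rw [hna]
  -- τ restricted to the subgame is the deviated profile
  have hind : induced τ ν = dev t' (induced σ ν) j s' := by
    funext p k
    have hact : t.actor (ν ++ p) = t'.actor p := by
      unfold actor
      rw [hsub p]
    have hdrop : (ν ++ p).drop ν.length = p := by simp
    simp only [induced, dev, hτdef]
    by_cases hj : t'.actor p = some j
    · rw [if_pos hj, if_pos ⟨List.prefix_append _ _, by rw [hact]; exact hj⟩, hdrop]
    · rw [if_neg hj, if_neg (fun hc => hj (by rw [← hact]; exact hc.2))]
  -- τ is dominated by σ
  have hle : util τ t j ≤ util σ t j := by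
    apply convex_bound hw hn j (playerNodes t) τ
    · intro p i m cs hna hij k _
      simp only [hτdef]
      rw [if_neg (fun hc => hij (by
        have := hactor p i m cs hna
        rw [this] at hc
        exact Option.some_inj.mp hc.2))]
    · intro p m cs hna _
      by_cases hpre : ν <+: p
      · obtain ⟨p', rfl⟩ := hpre
        have hna' : t'.nodeAt p' = some (node j m cs) := by rw [← hsub p']; exact hna
        have hsp : s' p' < m := hs' p' j m cs hna'
        have hτp : ∀ k, τ (ν ++ p') k = if s' p' = k then 1 else 0 := by
          intro k
          simp only [hτdef]
          rw [if_pos ⟨List.prefix_append _ _, hactor _ _ _ _ hna⟩]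
          simp [pureProfile]
        constructor
        · intro k _
          rw [hτp k]
          split <;> norm_num
        · rw [show (∑ k ∈ Finset.range m, τ (ν ++ p') k)
              = ∑ k ∈ Finset.range m, if s' p' = k then (1:ℝ) else 0 from
            Finset.sum_congr rfl (fun k _ => hτp k), Finset.sum_ite_eq]
          simp [hsp]
      · have hτp : ∀ k, τ p k = σ p k := by
          intro k
          simp only [hτdef]
          rw [if_neg (fun hc => hpre hc.1)]
        constructor
        · intro k hk
          rw [hτp k]
          exact ((hσ p j m cs hna).1 k hk)
        · rw [Finset.sum_congr rfl (fun k _ => hτp k)]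
          exact (hσ p j m cs hna).2
    · intro p m cs hna hpL
      exact absurd (mem_playerNodes hna) hpL
  -- off-path parts and the probability of reaching ν agree
  have hoff : ((leaves t).map fun l =>
        if ν <+: l then 0 else t.payoffAt l j * pathProb τ t [] l).sum
      = ((leaves t).map fun l =>
        if ν <+: l then 0 else t.payoffAt l j * pathProb σ t [] l).sum := by
    congr 1
    apply List.map_congr_left
    intro l _
    by_cases hp : ν <+: l
    · simp [hp]
    · rw [if_neg hp, if_neg hp]
      congr 1
      apply pathProb_congr
      intro l₁ k l₂ i m cs hl _ _
      simp only [List.nil_append, hτdef]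
      rw [if_neg (fun hc => hp (hc.1.trans ⟨k :: l₂, hl.symm⟩))]
  have hP : pathProb τ t [] ν = pathProb σ t [] ν := by
    apply pathProb_congr
    intro l₁ k l₂ i m cs hl _ _
    simp only [List.nil_append, hτdef]
    rw [if_neg (fun hc => by
      have h1 : ν.length ≤ l₁.length := hc.1.length_le
      have h2 : ν.length = l₁.length + 1 + l₂.length := by
        rw [hl]; simp [List.length_append]; omega
      omega)]
  rw [util_split hν τ j, util_split hν σ j, hoff, hP] at hle
  have hle2 : pathProb σ t [] ν * util (induced τ ν) t' j
      ≤ pathProb σ t [] ν * util (induced σ ν) t' j := by linarith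
  have := le_of_mul_le_mul_left hle2 hpos
  rwa [hind] at this
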